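/- Let A + λB be a 2×2 upper triangular regular complex pencil with diagonal entries a₁₁ + λb₁₁ and a₂₂ + λb₂₂. Then there exist unitary matrices U, V ∈ ℂ^{2×2} such that C + λD := U*(A + λB)V is upper triangular, the eigenvalue of the (1,1) diagonal entry of C + λD equals the eigenvalue of a₂₂ + λb₂₂ (i.e., a₂₂ d₁₁ = b₂₂ c₁₁), and the eigenvalue of the (2,2) diagonal entry equals that of a₁₁ + λb₁₁ (i.e., a₁₁ d₂₂ = b₁₁ c₂₂). -/

import Mathlib

open Polynomial Matrix

noncomputable def pencilPoly (A B : Matrix (Fin 2) (Fin 2) ℂ) :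
    Matrix (Fin 2) (Fin 2) (Polynomial ℂ) :=
  Matrix.of fun i j => C (A i j) + X * C (B i j)

/-!
Write `d = a₂₂ b₁₁ - b₂₂ a₁₁`. If `d = 0` the two diagonal eigenvalues coincide and `U = V = 1`
works. Otherwise `x = (b₂₂ a₁₂ - a₂₂ b₁₂, d)` spans the kernel of `a₂₂ B - b₂₂ A`, and
`A x = a₂₂ y`, `B x = b₂₂ y` for `y = (a₁₂ b₁₁ - a₁₁ b₁₂, d)`. Unitary `V` and `U` whose first
columns are multiples of `x` and `y` therefore make `Uᴴ (A + λB) V` upper triangular with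
`(1,1)` entry a multiple of `a₂₂ + λ b₂₂`; the `(2,2)` entry is then a multiple of
`a₁₁ + λ b₁₁`, since the determinant of the pencil is preserved up to a unit.
-/

namespace Matrix

variable {R : Type*} [CommRing R] [StarRing R]

def completeColumn (p q : R) : Matrix (Fin 2) (Fin 2) R :=
  !![p, -star q; q, star p]

theorem completeColumn_conjTranspose_mul_self (p q : R) :
    (completeColumn p q)ᴴ * completeColumn p q = (star p * p + star q * q) • 1 := by
  ext i j
  fin_cases i <;> fin_cases j <;> simp [completeColumn, mul_apply, Fin.sum_univ_two] <;> ring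

theorem exists_smul_completeColumn_mem_unitaryGroup {𝕜 : Type*} [RCLike 𝕜] {p q : 𝕜}
    (h : p ≠ 0 ∨ q ≠ 0) : ∃ c : 𝕜, c • completeColumn p q ∈ unitaryGroup (Fin 2) 𝕜 := by
  have hpos : 0 < ‖p‖ ^ 2 + ‖q‖ ^ 2 := by
    rcases h with h | h <;> positivity
  refine ⟨((√(‖p‖ ^ 2 + ‖q‖ ^ 2))⁻¹ : ℝ), ?_⟩
  rw [mem_unitaryGroup_iff', star_eq_conjTranspose, conjTranspose_smul, smul_mul_smul_comm,
    completeColumn_conjTranspose_mul_self, smul_smul]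
  simp only [RCLike.star_def, RCLike.conj_ofReal, RCLike.conj_mul]
  norm_cast
  rw [← mul_inv, Real.mul_self_sqrt hpos.le, inv_mul_cancel₀ hpos.ne']
  simp

variable {A B : Matrix (Fin 2) (Fin 2) R}

def SwapsDiagonalEigenvalues (A B U V : Matrix (Fin 2) (Fin 2) R) : Prop :=
  (Uᴴ * A * V) 1 0 = 0 ∧ (Uᴴ * B * V) 1 0 = 0 ∧
    A 1 1 * (Uᴴ * B * V) 0 0 = B 1 1 * (Uᴴ * A * V) 0 0 ∧
    A 0 0 * (Uᴴ * B * V) 1 1 = B 0 0 * (Uᴴ * A * V) 1 1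

theorem SwapsDiagonalEigenvalues.smul {U V : Matrix (Fin 2) (Fin 2) R}
    (h : SwapsDiagonalEigenvalues A B U V) (r s : R) :
    SwapsDiagonalEigenvalues A B (r • U) (s • V) := by
  obtain ⟨hA, hB, h₀, h₁⟩ := h
  simp only [SwapsDiagonalEigenvalues, conjTranspose_smul, smul_mul, Matrix.mul_smul,
    smul_apply, smul_eq_mul, hA, hB, mul_zero, true_and]
  constructor
  · linear_combination (star r * s) * h₀
  · linear_combination (star r * s) * h₁

theorem swapsDiagonalEigenvalues_one (hA : A 1 0 = 0) (hB : B 1 0 = 0)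
    (h : A 1 1 * B 0 0 = B 1 1 * A 0 0) : SwapsDiagonalEigenvalues A B 1 1 := by
  simp only [SwapsDiagonalEigenvalues, conjTranspose_one, one_mul, mul_one, hA, hB, true_and]
  exact ⟨h, by linear_combination -h⟩

theorem swapsDiagonalEigenvalues_completeColumn (hA : A 1 0 = 0) (hB : B 1 0 = 0) :
    SwapsDiagonalEigenvalues A B
      (completeColumn (A 0 1 * B 0 0 - A 0 0 * B 0 1) (A 1 1 * B 0 0 - B 1 1 * A 0 0))
      (completeColumn (B 1 1 * A 0 1 - A 1 1 * B 0 1) (A 1 1 * B 0 0 - B 1 1 * A 0 0)) := by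
  simp only [SwapsDiagonalEigenvalues, completeColumn, mul_apply, Fin.sum_univ_two,
    conjTranspose_apply, of_apply, cons_val', cons_val_zero, cons_val_one, empty_val',
    cons_val_fin_one, hA, hB, star_sub, star_mul', star_neg, star_star]
  refine ⟨?_, ?_, ?_, ?_⟩ <;> ring

end Matrix

theorem swap_eigenvalues_2x2_general (A B : Matrix (Fin 2) (Fin 2) ℂ)
    (hA : A 1 0 = 0) (hB : B 1 0 = 0) :
    ∃ U V : Matrix (Fin 2) (Fin 2) ℂ,
      U ∈ Matrix.unitaryGroup (Fin 2) ℂ ∧ V ∈ Matrix.unitaryGroup (Fin 2) ℂ ∧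
      (Uᴴ * A * V) 1 0 = 0 ∧ (Uᴴ * B * V) 1 0 = 0 ∧
      A 1 1 * (Uᴴ * B * V) 0 0 = B 1 1 * (Uᴴ * A * V) 0 0 ∧
      A 0 0 * (Uᴴ * B * V) 1 1 = B 0 0 * (Uᴴ * A * V) 1 1 := by
  by_cases hd : A 1 1 * B 0 0 - B 1 1 * A 0 0 = 0
  · exact ⟨1, 1, one_mem _, one_mem _, swapsDiagonalEigenvalues_one hA hB (sub_eq_zero.1 hd)⟩
  · obtain ⟨c, hU⟩ := exists_smul_completeColumn_mem_unitaryGroup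
      (p := A 0 1 * B 0 0 - A 0 0 * B 0 1) (.inr hd)
    obtain ⟨c', hV⟩ := exists_smul_completeColumn_mem_unitaryGroup
      (p := B 1 1 * A 0 1 - A 1 1 * B 0 1) (.inr hd)
    exact ⟨_, _, hU, hV, (swapsDiagonalEigenvalues_completeColumn hA hB).smul c c'⟩

/-- Swapping the two diagonal eigenvalues of a `2 × 2` upper triangular regular pencil
by a unitary equivalence. -/
theorem swap_eigenvalues_2x2 (A B : Matrix (Fin 2) (Fin 2) ℂ)
    (hA : A 1 0 = 0) (hB : B 1 0 = 0)
    (hreg : (pencilPoly A B).det ≠ 0) :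
    ∃ U V : Matrix (Fin 2) (Fin 2) ℂ,
      U ∈ Matrix.unitaryGroup (Fin 2) ℂ ∧ V ∈ Matrix.unitaryGroup (Fin 2) ℂ ∧
      (Uᴴ * A * V) 1 0 = 0 ∧ (Uᴴ * B * V) 1 0 = 0 ∧
      A 1 1 * (Uᴴ * B * V) 0 0 = B 1 1 * (Uᴴ * A * V) 0 0 ∧
      A 0 0 * (Uᴴ * B * V) 1 1 = B 0 0 * (Uᴴ * A * V) 1 1 :=
  swap_eigenvalues_2x2_general A B hA hB
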